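/- arXiv:2301.09205 — 6 statements merged into one kernel-verified Lean document; each statement's English description precedes it below -/
import Mathlib

section
/- Let Ω be a nonempty compact metric space and f : Ω → Ω a continuous map. Then, with values in EReal, the supremum over all open covers α of Ω of limsup_{n→∞} (log N(α⁽ⁿ⁾))/n equals the supremum over all ε > 0 of limsup_{n→∞} (log r(n,ε))/n, and also equals the supremum over all ε > 0 of limsup_{n→∞} (log s(n,ε))/n. (Since the inner quantities are antitone in ε, these suprema over ε > 0 coincide with the limits as ε → 0⁺; this is the equality of the four classical definitions of topological entropy.) -/
open Filter Set Function

noncomputable section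

variable {Ω : Type*}

/-- The Bowen (dynamical) metric `dₙ(x,y) = max_{0 ≤ t < n} d(f^[t] x, f^[t] y)`. -/
def bowenDist [PseudoMetricSpace Ω] (f : Ω → Ω) (n : ℕ) (x y : Ω) : ℝ :=
  ⨆ t : Fin n, dist (f^[(t : ℕ)] x) (f^[(t : ℕ)] y)

/-- `A` is `(n,ε)`-spanning: every point of `Ω` is within Bowen distance `ε` of `A`. -/
def IsDynSpanning [PseudoMetricSpace Ω] (f : Ω → Ω) (n : ℕ) (ε : ℝ) (A : Set Ω) : Prop :=
  ∀ x : Ω, ∃ a ∈ A, bowenDist f n x a ≤ ε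

/-- `A` is `(n,ε)`-separated: distinct points of `A` are more than `ε` apart
in the Bowen metric. -/
def IsDynSeparated [PseudoMetricSpace Ω] (f : Ω → Ω) (n : ℕ) (ε : ℝ) (A : Set Ω) : Prop :=
  ∀ a ∈ A, ∀ a' ∈ A, a ≠ a' → ε < bowenDist f n a a'

/-- `r(n,ε)`: minimal cardinality of a finite `(n,ε)`-spanning subset of `Ω`. -/
def spanNum [PseudoMetricSpace Ω] (f : Ω → Ω) (n : ℕ) (ε : ℝ) : ℕ :=
  sInf {k : ℕ | ∃ A : Finset Ω, IsDynSpanning f n ε (↑A : Set Ω) ∧ A.card = k}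

/-- `s(n,ε)`: maximal cardinality of a finite `(n,ε)`-separated subset of `Ω`. -/
def sepNum [PseudoMetricSpace Ω] (f : Ω → Ω) (n : ℕ) (ε : ℝ) : ℕ :=
  sSup {k : ℕ | ∃ A : Finset Ω, IsDynSeparated f n ε (↑A : Set Ω) ∧ A.card = k}

/-- An open cover of `Ω`: a set of open sets whose union is all of `Ω`. -/
def IsOpenCover [TopologicalSpace Ω] (α : Set (Set Ω)) : Prop :=
  (∀ U ∈ α, IsOpen U) ∧ ⋃₀ α = univ

/-- The dynamical refinement `α⁽ⁿ⁾ = { U₀ ∩ f⁻¹ U₁ ∩ ⋯ ∩ f^[-(n-1)] U_{n-1} }`. -/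
def dynRefinement (f : Ω → Ω) (n : ℕ) (α : Set (Set Ω)) : Set (Set Ω) :=
  {V | ∃ U : Fin n → Set Ω, (∀ t, U t ∈ α) ∧ V = ⋂ t : Fin n, f^[(t : ℕ)] ⁻¹' U t}

/-- `N(β)`: minimal cardinality of a finite subcover of `β`. -/
def coverNum (β : Set (Set Ω)) : ℕ :=
  sInf {k : ℕ | ∃ γ : Finset (Set Ω), (↑γ : Set (Set Ω)) ⊆ β ∧
    ⋃₀ (↑γ : Set (Set Ω)) = univ ∧ γ.card = k}

/-!
Spanning and separated numbers sandwich each other: a separated set of maximal cardinality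
is spanning at the same scale, and an `(n,ε)`-separated set injects into any
`(n,ε/2)`-spanning set. Open covers are compared with them in both directions. If `δ` is a
Lebesgue number of `α`, then for every point `a` of an `(n,δ/2)`-spanning set the Bowen ball
around `a` lies in one member of `α⁽ⁿ⁾`, so `N(α⁽ⁿ⁾) ≤ r(n,δ/2)`. Conversely, a member of the
refinement of the cover by `ε/2`-balls contains at most one point of an `(n,ε)`-separated set,
so `s(n,ε) ≤ N(α⁽ⁿ⁾)`.
-/

section Bowen

variable [PseudoMetricSpace Ω] (f : Ω → Ω)

lemma bowenDist_nonneg (n : ℕ) (x y : Ω) : 0 ≤ bowenDist f n x y :=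
  Real.iSup_nonneg fun _ => dist_nonneg

lemma bowenDist_le {n : ℕ} {x y : Ω} {ε : ℝ} (hε : 0 ≤ ε)
    (h : ∀ t < n, dist (f^[t] x) (f^[t] y) ≤ ε) : bowenDist f n x y ≤ ε :=
  Real.iSup_le (fun t => h t t.2) hε

lemma dist_iterate_le_bowenDist {n t : ℕ} (ht : t < n) (x y : Ω) :
    dist (f^[t] x) (f^[t] y) ≤ bowenDist f n x y :=
  le_ciSup (f := fun s : Fin n => dist (f^[(s : ℕ)] x) (f^[(s : ℕ)] y))
    (finite_range _).bddAbove ⟨t, ht⟩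

@[simp]
lemma bowenDist_self (n : ℕ) (x : Ω) : bowenDist f n x x = 0 :=
  le_antisymm (bowenDist_le f le_rfl fun _ _ => by simp) (bowenDist_nonneg f n x x)

lemma bowenDist_comm (n : ℕ) (x y : Ω) : bowenDist f n x y = bowenDist f n y x :=
  iSup_congr fun _ => dist_comm _ _

lemma bowenDist_triangle (n : ℕ) (x y z : Ω) :
    bowenDist f n x z ≤ bowenDist f n x y + bowenDist f n y z :=
  bowenDist_le f (add_nonneg (bowenDist_nonneg f n x y) (bowenDist_nonneg f n y z))
    fun t ht => (dist_triangle _ (f^[t] y) _).trans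
      (add_le_add (dist_iterate_le_bowenDist f ht x y) (dist_iterate_le_bowenDist f ht y z))

variable {f} {n : ℕ} {ε : ℝ}

lemma IsDynSeparated.insert_of_forall_lt {A : Set Ω} (hA : IsDynSeparated f n ε A) {x : Ω}
    (hx : ∀ a ∈ A, ε < bowenDist f n x a) : IsDynSeparated f n ε (insert x A) := by
  rintro a (rfl | ha) a' (rfl | ha') hne
  · exact absurd rfl hne
  · exact hx a' ha'
  · rw [bowenDist_comm]
    exact hx a ha
  · exact hA a ha a' ha' hne

lemma IsDynSeparated.card_le_of_isDynSpanning {μ : ℝ} (hμε : 2 * μ ≤ ε) {A S : Finset Ω}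
    (hA : IsDynSeparated f n ε (A : Set Ω)) (hS : IsDynSpanning f n μ (S : Set Ω)) :
    A.card ≤ S.card := by
  choose g hgS hgd using hS
  refine Finset.card_le_card_of_injOn g (fun a _ => hgS a) fun a ha a' ha' hgg => ?_
  by_contra hne
  have hclose : bowenDist f n a a' ≤ bowenDist f n a (g a) + bowenDist f n a' (g a') :=
    calc _ ≤ _ := bowenDist_triangle f n a (g a) a'
      _ = _ := by rw [hgg, bowenDist_comm f n (g a') a']
  linarith [hA a ha a' ha' hne, hgd a, hgd a']

lemma IsDynSeparated.isDynSpanning_of_forall_card_le (hε : 0 ≤ ε) {A : Finset Ω}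
    (hA : IsDynSeparated f n ε (A : Set Ω))
    (hmax : ∀ B : Finset Ω, IsDynSeparated f n ε (B : Set Ω) → B.card ≤ A.card) :
    IsDynSpanning f n ε (A : Set Ω) := by
  classical
  intro x
  by_contra! hfar
  have hxA : x ∉ A := fun hx => (hfar x hx).not_ge (by simpa using hε)
  have hcard := hmax (insert x A) (by simpa using hA.insert_of_forall_lt hfar)
  rw [Finset.card_insert_of_notMem hxA] at hcard
  omega

end Bowen

section Compact

variable [PseudoMetricSpace Ω] [CompactSpace Ω] {f : Ω → Ω} {ε : ℝ}

lemma exists_finset_isDynSpanning (hf : Continuous f) (n : ℕ) (hε : 0 < ε) :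
    ∃ A : Finset Ω, IsDynSpanning f n ε (A : Set Ω) := by
  let V : Ω → Set Ω := fun a => ⋂ t : Fin n, f^[(t : ℕ)] ⁻¹' Metric.ball (f^[(t : ℕ)] a) ε
  have hV : ∀ a, IsOpen (V a) := fun a =>
    isOpen_iInter_of_finite fun t => Metric.isOpen_ball.preimage (hf.iterate _)
  obtain ⟨A, hA⟩ := isCompact_univ.elim_finite_subcover V hV
    fun x _ => mem_iUnion.2 ⟨x, mem_iInter.2 fun t => by simp [hε]⟩
  refine ⟨A, fun x => ?_⟩
  obtain ⟨a, haA, hxa⟩ := mem_iUnion₂.1 (hA (mem_univ x))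
  exact ⟨a, haA, bowenDist_le f hε.le fun t ht => (mem_iInter.1 hxa ⟨t, ht⟩).le⟩

lemma exists_isDynSpanning_card_eq_spanNum (hf : Continuous f) (n : ℕ) (hε : 0 < ε) :
    ∃ A : Finset Ω, IsDynSpanning f n ε (A : Set Ω) ∧ A.card = spanNum f n ε :=
  have ⟨A, hA⟩ := exists_finset_isDynSpanning hf n hε
  Nat.sInf_mem (s := {k | ∃ A : Finset Ω, IsDynSpanning f n ε (A : Set Ω) ∧ A.card = k})
    ⟨A.card, A, hA, rfl⟩

lemma bddAbove_card_isDynSeparated (hf : Continuous f) (n : ℕ) (hε : 0 < ε) :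
    BddAbove {k : ℕ | ∃ A : Finset Ω, IsDynSeparated f n ε (A : Set Ω) ∧ A.card = k} := by
  obtain ⟨S, hS⟩ := exists_finset_isDynSpanning hf n (half_pos hε)
  exact ⟨S.card, fun k ⟨A, hA, hAk⟩ => hAk ▸ hA.card_le_of_isDynSpanning (by linarith) hS⟩

lemma IsDynSeparated.card_le_sepNum (hf : Continuous f) (hε : 0 < ε) {n : ℕ} {A : Finset Ω}
    (hA : IsDynSeparated f n ε (A : Set Ω)) : A.card ≤ sepNum f n ε :=
  le_csSup (bddAbove_card_isDynSeparated hf n hε) ⟨A, hA, rfl⟩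

lemma exists_isDynSeparated_card_eq_sepNum (hf : Continuous f) (n : ℕ) (hε : 0 < ε) :
    ∃ A : Finset Ω, IsDynSeparated f n ε (A : Set Ω) ∧ A.card = sepNum f n ε :=
  Nat.sSup_mem (s := {k | ∃ A : Finset Ω, IsDynSeparated f n ε (A : Set Ω) ∧ A.card = k})
    ⟨0, ∅, fun a ha => by simp at ha, rfl⟩ (bddAbove_card_isDynSeparated hf n hε)

lemma spanNum_le_sepNum (hf : Continuous f) (n : ℕ) (hε : 0 < ε) :
    spanNum f n ε ≤ sepNum f n ε := by
  obtain ⟨A, hA, hAc⟩ := exists_isDynSeparated_card_eq_sepNum hf n hε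
  refine Nat.sInf_le ⟨A, hA.isDynSpanning_of_forall_card_le hε.le fun B hB => ?_, hAc⟩
  exact hAc ▸ hB.card_le_sepNum hf hε

lemma sepNum_le_spanNum_half (hf : Continuous f) (n : ℕ) (hε : 0 < ε) :
    sepNum f n ε ≤ spanNum f n (ε / 2) := by
  obtain ⟨S, hS, hSc⟩ := exists_isDynSpanning_card_eq_spanNum hf n (half_pos hε)
  refine csSup_le ⟨0, ∅, fun a ha => by simp at ha, rfl⟩ fun k ⟨A, hA, hAk⟩ => ?_
  exact hAk ▸ hSc ▸ hA.card_le_of_isDynSpanning (by linarith) hS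

end Compact

section Covers

variable [TopologicalSpace Ω] {f : Ω → Ω} {α : Set (Set Ω)}

lemma IsOpenCover.dynRefinement (hf : Continuous f) (hα : IsOpenCover α) (n : ℕ) :
    IsOpenCover (dynRefinement f n α) := by
  refine ⟨?_, eq_univ_of_forall fun x => ?_⟩
  · rintro V ⟨U, hU, rfl⟩
    exact isOpen_iInter_of_finite fun t => (hα.1 _ (hU t)).preimage (hf.iterate _)
  · have hx (t : Fin n) : ∃ U ∈ α, f^[(t : ℕ)] x ∈ U := mem_sUnion.1 (hα.2 ▸ mem_univ _)
    choose U hU hxU using hx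
    exact ⟨_, ⟨U, hU, rfl⟩, mem_iInter.2 hxU⟩

lemma IsOpenCover.exists_finset_subcover_card_eq_coverNum [CompactSpace Ω]
    (hα : IsOpenCover α) :
    ∃ γ : Finset (Set Ω), (γ : Set (Set Ω)) ⊆ α ∧ ⋃₀ (γ : Set (Set Ω)) = univ ∧
      γ.card = coverNum α := by
  obtain ⟨γ, hγα, hγ, hcov⟩ := isCompact_univ.elim_finite_subcover_image (c := id) hα.1
    (by simpa [← sUnion_eq_biUnion] using hα.2.ge)
  refine Nat.sInf_mem (s := {k | ∃ γ : Finset (Set Ω), (γ : Set (Set Ω)) ⊆ α ∧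
    ⋃₀ (γ : Set (Set Ω)) = univ ∧ γ.card = k})
    ⟨hγ.toFinset.card, hγ.toFinset, by simpa using hγα, ?_, rfl⟩
  simpa [sUnion_eq_biUnion, eq_univ_iff_forall] using hcov

end Covers

section CoversAndOrbits

variable [PseudoMetricSpace Ω] {f : Ω → Ω} {α : Set (Set Ω)}

lemma isOpenCover_range_ball {r : ℝ} (hr : 0 < r) :
    IsOpenCover (range fun x : Ω => Metric.ball x r) :=
  ⟨forall_mem_range.2 fun _ => Metric.isOpen_ball,
    eq_univ_of_forall fun x => ⟨_, mem_range_self x, Metric.mem_ball_self hr⟩⟩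

variable [CompactSpace Ω]

lemma coverNum_le_spanNum (hf : Continuous f) {δ μ : ℝ} (hμ : 0 < μ) (hμδ : μ < δ)
    (hδ : ∀ x : Ω, ∃ U ∈ α, Metric.ball x δ ⊆ U) (n : ℕ) :
    coverNum (dynRefinement f n α) ≤ spanNum f n μ := by
  classical
  obtain ⟨S, hS, hSc⟩ := exists_isDynSpanning_card_eq_spanNum hf n hμ
  choose U hUα hUball using hδ
  let V : Ω → Set Ω := fun a => ⋂ t : Fin n, f^[(t : ℕ)] ⁻¹' U (f^[(t : ℕ)] a)
  have hsub : (S.image V : Set (Set Ω)) ⊆ dynRefinement f n α := by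
    intro W hW
    obtain ⟨a, -, rfl⟩ := Finset.mem_image.1 hW
    exact ⟨fun t => U (f^[(t : ℕ)] a), fun t => hUα _, rfl⟩
  have hcov : ⋃₀ (S.image V : Set (Set Ω)) = univ := by
    refine eq_univ_of_forall fun x => ?_
    obtain ⟨a, haS, hxa⟩ := hS x
    refine ⟨V a, Finset.mem_coe.2 (Finset.mem_image_of_mem V haS), mem_iInter.2 fun t => ?_⟩
    refine hUball _ (Metric.mem_ball.2 ?_)
    linarith [dist_iterate_le_bowenDist f t.2 x a]
  calc coverNum (dynRefinement f n α) ≤ (S.image V).card := Nat.sInf_le ⟨_, hsub, hcov, rfl⟩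
    _ ≤ S.card := Finset.card_image_le
    _ = spanNum f n μ := hSc

lemma sepNum_le_coverNum (hf : Continuous f) (hα : IsOpenCover α) {ε : ℝ} (hε : 0 < ε)
    (hsmall : ∀ U ∈ α, ∀ x ∈ U, ∀ y ∈ U, dist x y ≤ ε) (n : ℕ) :
    sepNum f n ε ≤ coverNum (dynRefinement f n α) := by
  obtain ⟨γ, hγ, hcov, hγc⟩ := (hα.dynRefinement hf n).exists_finset_subcover_card_eq_coverNum
  refine csSup_le ⟨0, ∅, fun a ha => by simp at ha, rfl⟩ fun k ⟨A, hA, hAk⟩ => ?_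
  rw [← hAk, ← hγc]
  have hmem (a : Ω) : ∃ W ∈ γ, a ∈ W := mem_sUnion.1 (hcov ▸ mem_univ a)
  choose g hgγ hag using hmem
  refine Finset.card_le_card_of_injOn g (fun a _ => hgγ a) fun a ha a' ha' hgg => ?_
  by_contra hne
  obtain ⟨W, hWα, hW⟩ := hγ (hgγ a)
  have hmemW (b : Ω) (hb : g b = g a) (t : Fin n) : f^[(t : ℕ)] b ∈ W t := by
    have hbW := hag b
    rw [hb, hW] at hbW
    exact mem_iInter.1 hbW t
  have hclose : bowenDist f n a a' ≤ ε := bowenDist_le f hε.le fun t ht =>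
    hsmall _ (hWα ⟨t, ht⟩) _ (hmemW a rfl ⟨t, ht⟩) _ (hmemW a' hgg.symm ⟨t, ht⟩)
  exact (hA a ha a' ha' hne).not_ge hclose

end CoversAndOrbits

section Entropy

/-- Terms with `u n = 0` count as `Real.log 0 / n = 0`. -/
def growthRate (u : ℕ → ℕ) : EReal :=
  limsup (fun n : ℕ => ((Real.log (u n) / n : ℝ) : EReal)) atTop

lemma growthRate_mono {u v : ℕ → ℕ} (h : ∀ n, u n ≤ v n) : growthRate u ≤ growthRate v := by
  refine limsup_le_limsup (.of_forall fun n => EReal.coe_le_coe_iff.2 ?_)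
  have hlog : Real.log (u n) ≤ Real.log (v n) := by
    rcases (u n).eq_zero_or_pos with hu | hu
    · simpa [hu] using Real.log_natCast_nonneg (v n)
    · exact Real.log_le_log (Nat.cast_pos.2 hu) (Nat.cast_le.2 (h n))
  exact div_le_div_of_nonneg_right hlog n.cast_nonneg

def coverEntropy [TopologicalSpace Ω] (f : Ω → Ω) : EReal :=
  ⨆ (α : Set (Set Ω)) (_ : IsOpenCover α), growthRate fun n => coverNum (dynRefinement f n α)

def spanEntropy [PseudoMetricSpace Ω] (f : Ω → Ω) : EReal :=
  ⨆ (ε : ℝ) (_ : 0 < ε), growthRate fun n => spanNum f n ε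

def sepEntropy [PseudoMetricSpace Ω] (f : Ω → Ω) : EReal :=
  ⨆ (ε : ℝ) (_ : 0 < ε), growthRate fun n => sepNum f n ε

variable [PseudoMetricSpace Ω] [CompactSpace Ω] {f : Ω → Ω}

lemma coverEntropy_le_spanEntropy (hf : Continuous f) : coverEntropy f ≤ spanEntropy f := by
  refine iSup₂_le fun α hα => ?_
  obtain ⟨δ, hδ, hLeb⟩ :=
    lebesgue_number_lemma_of_metric_sUnion isCompact_univ hα.1 hα.2.ge
  refine le_iSup₂_of_le (δ / 2) (half_pos hδ) (growthRate_mono fun n => ?_)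
  exact coverNum_le_spanNum hf (half_pos hδ) (half_lt_self hδ) (fun x => hLeb x trivial) n

lemma spanEntropy_le_sepEntropy (hf : Continuous f) : spanEntropy f ≤ sepEntropy f :=
  iSup₂_le fun ε hε =>
    le_iSup₂_of_le ε hε (growthRate_mono fun n => spanNum_le_sepNum hf n hε)

lemma sepEntropy_le_spanEntropy (hf : Continuous f) : sepEntropy f ≤ spanEntropy f :=
  iSup₂_le fun ε hε =>
    le_iSup₂_of_le (ε / 2) (half_pos hε) (growthRate_mono fun n => sepNum_le_spanNum_half hf n hε)

lemma sepEntropy_le_coverEntropy (hf : Continuous f) : sepEntropy f ≤ coverEntropy f := by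
  refine iSup₂_le fun ε hε => ?_
  have hsmall : ∀ U ∈ range fun x : Ω => Metric.ball x (ε / 2), ∀ x ∈ U, ∀ y ∈ U,
      dist x y ≤ ε := by
    rintro - ⟨z, rfl⟩ x hx y hy
    linarith [dist_triangle_right x y z, Metric.mem_ball.1 hx, Metric.mem_ball.1 hy]
  exact le_iSup₂_of_le _ (isOpenCover_range_ball (half_pos hε))
    (growthRate_mono (sepNum_le_coverNum hf (isOpenCover_range_ball (half_pos hε)) hε hsmall))

end Entropy

theorem entropy_defs_agree_general [MetricSpace Ω] [CompactSpace Ω]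
    (f : Ω → Ω) (hf : Continuous f) :
    (⨆ (α : Set (Set Ω)) (_ : IsOpenCover α),
        Filter.limsup (fun n : ℕ =>
          ((Real.log (coverNum (dynRefinement f n α)) / n : ℝ) : EReal)) Filter.atTop)
      = (⨆ (ε : ℝ) (_ : 0 < ε),
          Filter.limsup (fun n : ℕ =>
            ((Real.log (spanNum f n ε) / n : ℝ) : EReal)) Filter.atTop) ∧
    (⨆ (ε : ℝ) (_ : 0 < ε),
        Filter.limsup (fun n : ℕ =>
          ((Real.log (spanNum f n ε) / n : ℝ) : EReal)) Filter.atTop)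
      = (⨆ (ε : ℝ) (_ : 0 < ε),
          Filter.limsup (fun n : ℕ =>
            ((Real.log (sepNum f n ε) / n : ℝ) : EReal)) Filter.atTop) :=
  ⟨le_antisymm (coverEntropy_le_spanEntropy hf)
      ((spanEntropy_le_sepEntropy hf).trans (sepEntropy_le_coverEntropy hf)),
    le_antisymm (spanEntropy_le_sepEntropy hf) (sepEntropy_le_spanEntropy hf)⟩

/-- The four classical definitions of topological entropy agree: the supremum over open
covers of the exponential growth rate of `N(α⁽ⁿ⁾)` equals the supremum over `ε > 0` of the
growth rate of the spanning numbers `r(n,ε)`, and equals the supremum over `ε > 0` of the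
growth rate of the separation numbers `s(n,ε)`. -/
theorem entropy_defs_agree [MetricSpace Ω] [CompactSpace Ω] [Nonempty Ω]
    (f : Ω → Ω) (hf : Continuous f) :
    (⨆ (α : Set (Set Ω)) (_ : IsOpenCover α),
        Filter.limsup (fun n : ℕ =>
          ((Real.log (coverNum (dynRefinement f n α)) / n : ℝ) : EReal)) Filter.atTop)
      = (⨆ (ε : ℝ) (_ : 0 < ε),
          Filter.limsup (fun n : ℕ =>
            ((Real.log (spanNum f n ε) / n : ℝ) : EReal)) Filter.atTop) ∧
    (⨆ (ε : ℝ) (_ : 0 < ε),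
        Filter.limsup (fun n : ℕ =>
          ((Real.log (spanNum f n ε) / n : ℝ) : EReal)) Filter.atTop)
      = (⨆ (ε : ℝ) (_ : 0 < ε),
          Filter.limsup (fun n : ℕ =>
            ((Real.log (sepNum f n ε) / n : ℝ) : EReal)) Filter.atTop) :=
  entropy_defs_agree_general f hf
end
end

section
/- Let Ω be a nonempty compact metric space, f : Ω → Ω a continuous map, ε > 0, and α an open cover of Ω each of whose members has diameter at most ε. Then for every n ≥ 1, every (n,ε)-separated set E ⊆ Ω, and every subfamily 𝒱 ⊆ α⁽ⁿ⁾ that covers Ω, no two distinct points of E lie in a common member of 𝒱, so |E| ≤ |𝒱|; consequently s(n,ε) ≤ N(α⁽ⁿ⁾). -/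
open Filter Set Function

noncomputable section

variable {Ω : Type*}

/-!
Two points of a member `⋂ t, f^[t] ⁻¹' U t` of `α⁽ⁿ⁾` have their first `n` iterates in the
same sets `U t`, each of diameter at most `ε`, so they are at Bowen distance at most `ε`. Hence a
member of `α⁽ⁿ⁾` contains at most one point of an `(n,ε)`-separated set, and choosing for each
point a member of a cover `𝒱 ⊆ α⁽ⁿ⁾` containing it is injective. The minimum `N(α⁽ⁿ⁾)` is
attained: a finite subcover `α₀` of `α` gives the finite cover `α₀⁽ⁿ⁾ ⊆ α⁽ⁿ⁾`.
-/

section Refinement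

variable (f : Ω → Ω) (n : ℕ)

theorem dynRefinement_mono {α β : Set (Set Ω)} (h : α ⊆ β) :
    dynRefinement f n α ⊆ dynRefinement f n β := by
  rintro V ⟨U, hU, rfl⟩
  exact ⟨U, fun t => h (hU t), rfl⟩

theorem Set.Finite.dynRefinement {α : Set (Set Ω)} (hα : α.Finite) :
    (dynRefinement f n α).Finite := by
  have : Finite α := hα
  refine (finite_range fun U : Fin n → α => ⋂ t : Fin n, f^[(t : ℕ)] ⁻¹' (U t : Set Ω)).subset ?_
  rintro V ⟨U, hU, rfl⟩
  exact ⟨fun t => ⟨U t, hU t⟩, rfl⟩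

theorem sUnion_dynRefinement_eq_univ {α : Set (Set Ω)} (hα : ⋃₀ α = univ) :
    ⋃₀ dynRefinement f n α = univ := by
  refine eq_univ_of_forall fun x => ?_
  choose U hU hxU using fun t : Fin n => mem_sUnion.1 (hα ▸ mem_univ (f^[(t : ℕ)] x))
  exact ⟨_, ⟨U, hU, rfl⟩, mem_iInter.2 hxU⟩

theorem IsOpenCover.exists_finite_subcover [TopologicalSpace Ω] [CompactSpace Ω]
    {α : Set (Set Ω)} (hα : IsOpenCover α) : ∃ α₀ ⊆ α, α₀.Finite ∧ ⋃₀ α₀ = univ := by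
  obtain ⟨α₀, hα₀α, hα₀fin, hα₀cov⟩ := isCompact_univ.elim_finite_subcover_image
    (c := fun U => U) hα.1 (by rw [← sUnion_eq_biUnion, hα.2])
  exact ⟨α₀, hα₀α, hα₀fin, univ_subset_iff.1 (by rwa [sUnion_eq_biUnion])⟩

theorem exists_finset_subcover_dynRefinement [TopologicalSpace Ω] [CompactSpace Ω]
    {α : Set (Set Ω)} (hα : IsOpenCover α) :
    ∃ γ : Finset (Set Ω), ↑γ ⊆ dynRefinement f n α ∧ ⋃₀ (↑γ : Set (Set Ω)) = univ := by
  obtain ⟨α₀, hα₀α, hα₀fin, hα₀cov⟩ := hα.exists_finite_subcover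
  refine ⟨(hα₀fin.dynRefinement f n).toFinset, ?_, ?_⟩ <;> rw [Finite.coe_toFinset]
  · exact dynRefinement_mono f n hα₀α
  · exact sUnion_dynRefinement_eq_univ f n hα₀cov

theorem exists_finset_card_eq_coverNum {β : Set (Set Ω)}
    (h : ∃ γ : Finset (Set Ω), ↑γ ⊆ β ∧ ⋃₀ (↑γ : Set (Set Ω)) = univ) :
    ∃ γ : Finset (Set Ω), ↑γ ⊆ β ∧ ⋃₀ (↑γ : Set (Set Ω)) = univ ∧ γ.card = coverNum β := by
  obtain ⟨γ, hγβ, hγcov⟩ := h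
  exact Nat.sInf_mem (s := {k | ∃ γ : Finset (Set Ω), ↑γ ⊆ β ∧ ⋃₀ (↑γ : Set (Set Ω)) = univ ∧
    γ.card = k}) ⟨γ.card, γ, hγβ, hγcov, rfl⟩

end Refinement

section Separated

variable [PseudoMetricSpace Ω] {f : Ω → Ω} {n : ℕ} {ε : ℝ} {α : Set (Set Ω)}

theorem bowenDist_le_of_mem_dynRefinement (hε : 0 ≤ ε)
    (hdiam : ∀ U ∈ α, Metric.ediam U ≤ ENNReal.ofReal ε) {V : Set Ω}
    (hV : V ∈ dynRefinement f n α) {x y : Ω} (hx : x ∈ V) (hy : y ∈ V) :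
    bowenDist f n x y ≤ ε := by
  obtain ⟨U, hU, rfl⟩ := hV
  refine Real.iSup_le (fun t => (edist_le_ofReal hε).1 ?_) hε
  exact (Metric.edist_le_ediam_of_mem (s := U t) (mem_iInter.1 hx t) (mem_iInter.1 hy t)).trans
    (hdiam _ (hU t))

theorem IsDynSeparated.subsingleton_inter_of_mem_dynRefinement {E : Set Ω}
    (hE : IsDynSeparated f n ε E) (hε : 0 ≤ ε)
    (hdiam : ∀ U ∈ α, Metric.ediam U ≤ ENNReal.ofReal ε) {V : Set Ω}
    (hV : V ∈ dynRefinement f n α) : (E ∩ V).Subsingleton := by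
  rintro x ⟨hxE, hxV⟩ y ⟨hyE, hyV⟩
  by_contra hxy
  exact (hE x hxE y hyE hxy).not_ge (bowenDist_le_of_mem_dynRefinement hε hdiam hV hxV hyV)

theorem IsDynSeparated.card_le_card_of_sUnion_eq_univ {E : Finset Ω} {𝒱 : Finset (Set Ω)}
    (hE : IsDynSeparated f n ε (↑E : Set Ω)) (hε : 0 ≤ ε)
    (hdiam : ∀ U ∈ α, Metric.ediam U ≤ ENNReal.ofReal ε)
    (h𝒱 : (↑𝒱 : Set (Set Ω)) ⊆ dynRefinement f n α) (hcov : ⋃₀ (↑𝒱 : Set (Set Ω)) = univ) :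
    E.card ≤ 𝒱.card := by
  choose V hV𝒱 hxV using fun x : Ω => mem_sUnion.1 (hcov ▸ mem_univ x)
  refine Finset.card_le_card_of_injOn V (fun x _ => hV𝒱 x) fun x hx y hy hxy => ?_
  exact hE.subsingleton_inter_of_mem_dynRefinement hε hdiam (h𝒱 (hV𝒱 x))
    ⟨hx, hxV x⟩ ⟨hy, hxy ▸ hxV y⟩

theorem sepNum_le {k : ℕ}
    (h : ∀ A : Finset Ω, IsDynSeparated f n ε (↑A : Set Ω) → A.card ≤ k) :
    sepNum f n ε ≤ k :=
  csSup_le' <| by rintro _ ⟨A, hA, rfl⟩; exact h A hA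

end Separated

theorem sepNum_le_coverNum_dynRefinement_general [MetricSpace Ω] [CompactSpace Ω]
    (f : Ω → Ω) (ε : ℝ) (hε : 0 < ε)
    (α : Set (Set Ω)) (hα : IsOpenCover α)
    (hdiam : ∀ U ∈ α, EMetric.diam U ≤ ENNReal.ofReal ε) :
    ∀ n : ℕ, 1 ≤ n →
      (∀ E : Set Ω, IsDynSeparated f n ε E →
        ∀ 𝒱 : Set (Set Ω), 𝒱 ⊆ dynRefinement f n α → ⋃₀ 𝒱 = univ →
          ∀ V ∈ 𝒱, ∀ x ∈ E, ∀ y ∈ E, x ≠ y → ¬(x ∈ V ∧ y ∈ V)) ∧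
      (∀ (E : Finset Ω) (𝒱 : Finset (Set Ω)), IsDynSeparated f n ε (↑E : Set Ω) →
        (↑𝒱 : Set (Set Ω)) ⊆ dynRefinement f n α → ⋃₀ (↑𝒱 : Set (Set Ω)) = univ →
        E.card ≤ 𝒱.card) ∧
      sepNum f n ε ≤ coverNum (dynRefinement f n α) := by
  intro n _
  obtain ⟨γ, hγα, hγcov, hγcard⟩ :=
    exists_finset_card_eq_coverNum (exists_finset_subcover_dynRefinement f n hα)
  refine ⟨fun E hE 𝒱 h𝒱 _ V hV x hx y hy hxy hxyV => hxy ?_,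
    fun E 𝒱 hE h𝒱 hcov => hE.card_le_card_of_sUnion_eq_univ hε.le hdiam h𝒱 hcov,
    sepNum_le fun A hA => hγcard ▸ hA.card_le_card_of_sUnion_eq_univ hε.le hdiam hγα hγcov⟩
  exact hE.subsingleton_inter_of_mem_dynRefinement hε.le hdiam (h𝒱 hV) ⟨hx, hxyV.1⟩ ⟨hy, hxyV.2⟩

/-- If every member of the open cover `α` has diameter at most `ε`, then for every `n ≥ 1`,
no two distinct points of an `(n,ε)`-separated set lie in a common member of a subfamily
`𝒱 ⊆ α⁽ⁿ⁾` covering `Ω`; hence `|E| ≤ |𝒱|` for finite such families, and consequently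
`s(n,ε) ≤ N(α⁽ⁿ⁾)`. -/
theorem sepNum_le_coverNum_dynRefinement [MetricSpace Ω] [CompactSpace Ω] [Nonempty Ω]
    (f : Ω → Ω) (hf : Continuous f) (ε : ℝ) (hε : 0 < ε)
    (α : Set (Set Ω)) (hα : IsOpenCover α)
    (hdiam : ∀ U ∈ α, EMetric.diam U ≤ ENNReal.ofReal ε) :
    ∀ n : ℕ, 1 ≤ n →
      (∀ E : Set Ω, IsDynSeparated f n ε E →
        ∀ 𝒱 : Set (Set Ω), 𝒱 ⊆ dynRefinement f n α → ⋃₀ 𝒱 = univ →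
          ∀ V ∈ 𝒱, ∀ x ∈ E, ∀ y ∈ E, x ≠ y → ¬(x ∈ V ∧ y ∈ V)) ∧
      (∀ (E : Finset Ω) (𝒱 : Finset (Set Ω)), IsDynSeparated f n ε (↑E : Set Ω) →
        (↑𝒱 : Set (Set Ω)) ⊆ dynRefinement f n α → ⋃₀ (↑𝒱 : Set (Set Ω)) = univ →
        E.card ≤ 𝒱.card) ∧
      sepNum f n ε ≤ coverNum (dynRefinement f n α) :=
  sepNum_le_coverNum_dynRefinement_general f ε hε α hα hdiam
end
end

section
/- Let X̃, X be categories and E a thin category (a preorder regarded as a category), ι : X̃ ⥤ X fully faithful, and G : X̃ ⥤ E, Gʳ : E ⥤ X̃ functors such that Gʳ ⋙ G = 𝟭 E and there exists a natural transformation G ⋙ Gʳ ⟶ 𝟭 X̃. Set K := Gʳ ⋙ ι : E ⥤ X. If D : X ⥤ E is a pointwise left Kan extension of 𝟭 E along K and L : X ⥤ E is a pointwise right Kan extension of 𝟭 E along K, then there exists a natural transformation D ⟶ L. -/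
/-!
In the thin category `E`, `D x` is a join of the `e` with `K e ⟶ x` and `L x` a meet of the `e'`
with `x ⟶ K e'`, so `D x ≤ L x` as soon as every `K e ⟶ K e'` forces `e ≤ e'`. It does: fullness
of `ι` lifts such a map to `Gʳ e ⟶ Gʳ e'`, and `G` carries this to `e ⟶ e'` since `Gʳ ⋙ G = 𝟭 E`.
-/

open CategoryTheory Limits

namespace CategoryTheory

section Thin

variable {E : Type*} [Category E] [Quiver.IsThin E]

def NatTrans.ofThin {C : Type*} [Category C] {F F' : C ⥤ E} (app : ∀ x, F.obj x ⟶ F'.obj x) :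
    F ⟶ F' where
  app := app
  naturality _ _ _ := Subsingleton.elim _ _

def Limits.Cocone.ofThin {J : Type*} [Category J] {F : J ⥤ E} (pt : E) (ι : ∀ j, F.obj j ⟶ pt) :
    Cocone F :=
  ⟨pt, NatTrans.ofThin (F' := (Functor.const J).obj pt) ι⟩

def Limits.Cone.ofThin {J : Type*} [Category J] {F : J ⥤ E} (pt : E) (π : ∀ j, pt ⟶ F.obj j) :
    Cone F :=
  ⟨pt, NatTrans.ofThin (F := (Functor.const J).obj pt) π⟩

variable {C X : Type*} [Category C] [Category X] {K : C ⥤ X} {F F' : C ⥤ E}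

theorem nonempty_hom_of_isPointwiseKanExtension
    {DL : Functor.LeftExtension K F} (hD : DL.IsPointwiseLeftKanExtension)
    {RL : Functor.RightExtension K F'} (hL : RL.IsPointwiseRightKanExtension)
    (h : ∀ c c', (K.obj c ⟶ K.obj c') → Nonempty (F.obj c ⟶ F'.obj c')) :
    Nonempty (DL.right ⟶ RL.left) :=
  ⟨NatTrans.ofThin fun x => (hD x).desc <| Cocone.ofThin _ fun j => (hL x).lift <|
    Cone.ofThin _ fun i => (h _ _ (j.hom ≫ i.hom)).some⟩

end Thin

theorem nonempty_hom_of_full_of_comp_eq_id {X' X E : Type*} [Category X'] [Category X]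
    [Category E] (ι : X' ⥤ X) [ι.Full] (G : X' ⥤ E) (Gr : E ⥤ X') (hGG : Gr ⋙ G = 𝟭 E)
    {e e' : E} (f : ι.obj (Gr.obj e) ⟶ ι.obj (Gr.obj e')) : Nonempty (e ⟶ e') :=
  ⟨eqToHom (Functor.congr_obj hGG e).symm ≫ G.map (ι.preimage f) ≫
    eqToHom (Functor.congr_obj hGG e')⟩

end CategoryTheory

theorem pointwiseLeftKan_to_pointwiseRightKan_general
    {X' X E : Type*} [Category X'] [Category X] [Category E] [Quiver.IsThin E]
    (ι : X' ⥤ X) [ι.Full]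
    (G : X' ⥤ E) (Gr : E ⥤ X') (hGG : Gr ⋙ G = 𝟭 E)
    (D : X ⥤ E) (αD : 𝟭 E ⟶ (Gr ⋙ ι) ⋙ D)
    (hD : (Functor.LeftExtension.mk D αD).IsPointwiseLeftKanExtension)
    (L : X ⥤ E) (αL : (Gr ⋙ ι) ⋙ L ⟶ 𝟭 E)
    (hL : (Functor.RightExtension.mk L αL).IsPointwiseRightKanExtension) :
    Nonempty (D ⟶ L) :=
  nonempty_hom_of_isPointwiseKanExtension hD hL fun _ _ f =>
    nonempty_hom_of_full_of_comp_eq_id ι G Gr hGG f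

/-- If `E` is thin, `Gʳ ⋙ G = 𝟭 E`, `G ⋙ Gʳ ⟶ 𝟭 X̃`, `ι` is fully faithful,
`D` is a pointwise left Kan extension of `𝟭 E` along `K := Gʳ ⋙ ι` and `L` is a pointwise
right Kan extension of `𝟭 E` along `K`, then there is a natural transformation `D ⟶ L`. -/
theorem pointwiseLeftKan_to_pointwiseRightKan
    {X' X E : Type*} [Category X'] [Category X] [Category E] [Quiver.IsThin E]
    (ι : X' ⥤ X) [ι.Full] [ι.Faithful]
    (G : X' ⥤ E) (Gr : E ⥤ X') (hGG : Gr ⋙ G = 𝟭 E) (η : G ⋙ Gr ⟶ 𝟭 X')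
    (D : X ⥤ E) (αD : 𝟭 E ⟶ (Gr ⋙ ι) ⋙ D)
    (hD : (Functor.LeftExtension.mk D αD).IsPointwiseLeftKanExtension)
    (L : X ⥤ E) (αL : (Gr ⋙ ι) ⋙ L ⟶ 𝟭 E)
    (hL : (Functor.RightExtension.mk L αL).IsPointwiseRightKanExtension) :
    Nonempty (D ⟶ L) :=
  pointwiseLeftKan_to_pointwiseRightKan_general ι G Gr hGG D αD hD L αL hL
end

section
/- Let X̃, X be preorders and E a linear order, all regarded as thin categories; let ι : X̃ ⥤ X be fully faithful, and G : X̃ ⥤ E, Gʳ : E ⥤ X̃ functors such that Gʳ ⋙ G = 𝟭 E and there exists a natural transformation G ⋙ Gʳ ⟶ 𝟭 X̃. Set K := Gʳ ⋙ ι : E ⥤ X. Suppose D, L : X ⥤ E are functors such that for every object x of X, D(x) is a greatest element of the set { e : there is a morphism K(e) ⟶ x } (in particular K(D(x)) ⟶ x) and L(x) is a least element of the set { e : there is a morphism x ⟶ K(e) } (in particular x ⟶ K(L(x))). Then (L, D) is a qualifying pair: there is a natural transformation D ⟶ L, and whenever there is a morphism L(y) ⟶ D(x) in E there is a morphism y ⟶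 x in X; equivalently, there is a functor Ψ : Comma L D ⥤ Comma (𝟭 X) (𝟭 X) commuting with the projections to X. -/
/-!
`K := Gr ⋙ ι` reflects the order, since `Gr` has the left inverse `G` and `ι` is full.
The hypotheses sandwich `K (D x) ≤ x ≤ K (L x)`, which gives `D x ≤ L x` after reflecting
along `K`, and `y ≤ K (L y) ≤ K (D x) ≤ x` whenever `L y ≤ D x`. The same two inequalities
are natural transformations `𝟭 X ⟶ L ⋙ K` and `D ⋙ K ⟶ 𝟭 X`, and `Ψ` is the map of comma
categories they induce.
-/

open CategoryTheory

namespace CategoryTheory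

def NatTrans.ofLE {C D : Type*} [Category C] [Preorder D] {F G : C ⥤ D}
    (h : ∀ c, F.obj c ≤ G.obj c) : F ⟶ G where
  app c := homOfLE (h c)

namespace Functor

variable {A B : Type*} [Preorder A] [Preorder B]

theorem le_of_obj_le_of_full (F : A ⥤ B) [F.Full] {a b : A} (h : F.obj a ≤ F.obj b) : a ≤ b :=
  (F.preimage (homOfLE h)).le

theorem le_of_obj_le_of_comp_eq_id {F : A ⥤ B} {G : B ⥤ A} (hFG : F ⋙ G = 𝟭 A) {a b : A}
    (h : F.obj a ≤ F.obj b) : a ≤ b := by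
  simpa only [← Functor.comp_obj, hFG, Functor.id_obj] using G.monotone h

end Functor

end CategoryTheory

theorem qualifying_pair_of_greatest_least_general
    {X' X E : Type*} [Preorder X'] [Preorder X] [LinearOrder E]
    (ι : X' ⥤ X) [ι.Full]
    (G : X' ⥤ E) (Gr : E ⥤ X') (hGG : Gr ⋙ G = 𝟭 E)
    (D L : X ⥤ E)
    (hD : ∀ x : X, IsGreatest {e : E | (Gr ⋙ ι).obj e ≤ x} (D.obj x))
    (hL : ∀ x : X, IsLeast {e : E | x ≤ (Gr ⋙ ι).obj e} (L.obj x)) :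
    Nonempty (D ⟶ L) ∧
    (∀ x y : X, L.obj y ≤ D.obj x → y ≤ x) ∧
    ∃ Ψ : Comma L D ⥤ Comma (𝟭 X) (𝟭 X),
      Ψ ⋙ Comma.fst (𝟭 X) (𝟭 X) = Comma.fst L D ∧
      Ψ ⋙ Comma.snd (𝟭 X) (𝟭 X) = Comma.snd L D := by
  set K := Gr ⋙ ι
  have hK {a b : E} (h : K.obj a ≤ K.obj b) : a ≤ b :=
    Functor.le_of_obj_le_of_comp_eq_id hGG (ι.le_of_obj_le_of_full h)
  have hKD (x : X) : K.obj (D.obj x) ≤ x := (hD x).1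
  have hKL (x : X) : x ≤ K.obj (L.obj x) := (hL x).1
  refine ⟨⟨NatTrans.ofLE fun x => hK ((hKD x).trans (hKL x))⟩,
    fun x y h => (hKL y).trans ((K.monotone h).trans (hKD x)), ?_⟩
  exact ⟨Comma.map (F₁ := 𝟭 X) (F₂ := 𝟭 X) (F := K) (NatTrans.ofLE hKL) (NatTrans.ofLE hKD),
    rfl, rfl⟩

/-- Diameter/Lebesgue-number abstraction: with preorders `X̃, X`, a linear order `E`,
`ι` fully faithful, `Gʳ ⋙ G = 𝟭 E`, `G ⋙ Gʳ ⟶ 𝟭 X̃`, and `K := Gʳ ⋙ ι`, if `D(x)` is a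
greatest element of `{e | K(e) ⟶ x}` and `L(x)` is a least element of `{e | x ⟶ K(e)}`,
then `(L, D)` is a qualifying pair: `D ⟶ L`, a morphism `L(y) ⟶ D(x)` yields `y ⟶ x`, and
there is a functor `Ψ : Comma L D ⥤ Comma (𝟭 X) (𝟭 X)` commuting with the projections. -/
theorem qualifying_pair_of_greatest_least
    {X' X E : Type*} [Preorder X'] [Preorder X] [LinearOrder E]
    (ι : X' ⥤ X) [ι.Full] [ι.Faithful]
    (G : X' ⥤ E) (Gr : E ⥤ X') (hGG : Gr ⋙ G = 𝟭 E) (η : G ⋙ Gr ⟶ 𝟭 X')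
    (D L : X ⥤ E)
    (hD : ∀ x : X, IsGreatest {e : E | (Gr ⋙ ι).obj e ≤ x} (D.obj x))
    (hL : ∀ x : X, IsLeast {e : E | x ≤ (Gr ⋙ ι).obj e} (L.obj x)) :
    Nonempty (D ⟶ L) ∧
    (∀ x y : X, L.obj y ≤ D.obj x → y ≤ x) ∧
    ∃ Ψ : Comma L D ⥤ Comma (𝟭 X) (𝟭 X),
      Ψ ⋙ Comma.fst (𝟭 X) (𝟭 X) = Comma.fst L D ∧
      Ψ ⋙ Comma.snd (𝟭 X) (𝟭 X) = Comma.snd L D :=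
  qualifying_pair_of_greatest_least_general ι G Gr hGG D L hD hL
end

section
/- Let N, X, E be categories, Z a category with all colimits of shapes N, X and E, and let L, D : X ⥤ E be functors admitting a qualifier Ψ : Comma L D ⥤ Comma (𝟭 X) (𝟭 X) (a functor commuting with the projections to X). Suppose M_L : E ⥤ E with unit L ⟶ D ⋙ M_L is a left Kan extension of L along D, suppose M : E ⥤ Z with unit m ⟶ D ⋙ M is a left Kan extension of a functor m : X ⥤ Z along D, and let P : N ⥤ X be a functor such that P ⋙ D has a post-right adjoint. Then there exists a morphism colim M ⟶ colim (P ⋙ m) in Z; if moreover Z is a thin category, then colim (P ⋙ m), colim m and colim M are all isomorphic. -/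
open CategoryTheory CategoryTheory.Limits

/-- With `(L, D)` a pair admitting a qualifier `Ψ`, `M_L` a left Kan extension of `L` along
`D`, `M` a left Kan extension of `m` along `D`, and `P ⋙ D` having a post-right adjoint `Φ`,
there is a morphism `colim M ⟶ colim (P ⋙ m)`; if moreover `Z` is thin, then
`colim (P ⋙ m)`, `colim m` and `colim M` are all isomorphic. -/
theorem colimit_lan_to_colimit_comp_of_qualifier
    {N X E Z : Type*} [Category N] [Category X] [Category E] [Category Z]
    [HasColimitsOfShape N Z] [HasColimitsOfShape X Z] [HasColimitsOfShape E Z]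
    (L D : X ⥤ E)
    (Ψ : Comma L D ⥤ Comma (𝟭 X) (𝟭 X))
    (hfst : Ψ ⋙ Comma.fst (𝟭 X) (𝟭 X) = Comma.fst L D)
    (hsnd : Ψ ⋙ Comma.snd (𝟭 X) (𝟭 X) = Comma.snd L D)
    (ML : E ⥤ E) (u : L ⟶ D ⋙ ML) [ML.IsLeftKanExtension u]
    (m : X ⥤ Z) (M : E ⥤ Z) (η : m ⟶ D ⋙ M) [M.IsLeftKanExtension η]
    (P : N ⥤ X) (Φ : E ⥤ N) (θ : 𝟭 E ⟶ Φ ⋙ (P ⋙ D)) :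
    Nonempty (colimit M ⟶ colimit (P ⋙ m)) ∧
    (Quiver.IsThin Z →
      Nonempty (colimit (P ⋙ m) ≅ colimit m) ∧ Nonempty (colimit m ≅ colimit M)) := by
  classical
  -- the functor `K : X ⥤ Comma L D` induced by `θ`
  let K : X ⥤ Comma L D :=
    { obj := fun x => ⟨x, P.obj (Φ.obj (L.obj x)), θ.app (L.obj x)⟩
      map := fun {x y} f =>
        { left := f
          right := P.map (Φ.map (L.map f))
          w := by simpa using θ.naturality (L.map f) } }
  have e1 : ∀ x : X, (Ψ.obj (K.obj x)).left = x := fun x =>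
    Functor.congr_obj hfst (K.obj x)
  have e2 : ∀ x : X, (Ψ.obj (K.obj x)).right = P.obj (Φ.obj (L.obj x)) := fun x =>
    Functor.congr_obj hsnd (K.obj x)
  -- the natural transformation `𝟭 X ⟶ L ⋙ Φ ⋙ P` obtained from the qualifier
  let t : 𝟭 X ⟶ L ⋙ Φ ⋙ P :=
    { app := fun x => eqToHom (e1 x).symm ≫ (Ψ.obj (K.obj x)).hom ≫ eqToHom (e2 x)
      naturality := fun x y f => by
        have hl := Functor.congr_hom hfst (K.map f)
        have hr := Functor.congr_hom hsnd (K.map f)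
        have hw := (Ψ.map (K.map f)).w
        simp only [Functor.comp_map, Functor.id_map, Comma.fst_map, Comma.snd_map]
          at hl hr hw ⊢
        rw [hl, hr] at hw
        simp only [Category.assoc] at hw ⊢
        rw [← cancel_epi (eqToHom (e1 x))]
        simp only [eqToHom_trans_assoc, eqToHom_refl, Category.id_comp]
        rw [reassoc_of% hw]
        simp
        rfl }
  set c := colimit (P ⋙ m) with hc
  let γ : m ⟶ D ⋙ (Functor.const E).obj c :=
    { app := fun x => m.map (t.app x) ≫ colimit.ι (P ⋙ m) (Φ.obj (L.obj x))
      naturality := fun x y f => by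
        have ht := t.naturality f
        simp only [Functor.id_map, Functor.comp_map] at ht
        simp only [Functor.comp_map, Functor.const_obj_map, Category.comp_id]
        have cw := colimit.w (P ⋙ m) (Φ.map (L.map f))
        simp only [Functor.comp_map] at cw
        rw [← Category.assoc, ← m.map_comp, ht, m.map_comp, Category.assoc,
          cw]
        simp }
  let τ : M ⟶ (Functor.const E).obj c := M.descOfIsLeftKanExtension η _ γ
  have φ : colimit M ⟶ c := colimit.desc M ⟨c, τ⟩
  refine ⟨⟨φ⟩, fun ht => ?_⟩
  have a : colimit (P ⋙ m) ⟶ colimit m := colimit.pre m P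
  have b : colimit m ⟶ colimit M := colimMap η ≫ colimit.pre M D
  exact ⟨⟨⟨a, b ≫ φ, @Subsingleton.elim _ (ht _ _) _ _, @Subsingleton.elim _ (ht _ _) _ _⟩⟩,
         ⟨⟨b, φ ≫ a, @Subsingleton.elim _ (ht _ _) _ _, @Subsingleton.elim _ (ht _ _) _ _⟩⟩⟩
end

section
/- Let B, A, C be categories with C thin (a preorder regarded as a category), and let α : B ⥤ A, β : B ⥤ C be functors and γ : C ⥤ A a full functor with β ⋙ γ = α. If α admits a pointwise left Kan extension Lan_β α : C ⥤ A along β and a pointwise right Kan extension Ran_β α : C ⥤ A along β, then there exists a natural transformation Lan_β α ⟶ Ran_β α. -/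
open CategoryTheory

/-- If `C` is thin, `γ : C ⥤ A` is full with `β ⋙ γ = α`, and `α` admits a pointwise left
Kan extension `Lan` and a pointwise right Kan extension `Ran` along `β`, then there is a
natural transformation `Lan ⟶ Ran`. -/
theorem pointwiseLan_to_pointwiseRan_of_full_factorization
    {B A C : Type*} [Category B] [Category A] [Category C] [Quiver.IsThin C]
    (α : B ⥤ A) (β : B ⥤ C) (γ : C ⥤ A) [γ.Full] (hγ : β ⋙ γ = α)
    (Lan : C ⥤ A) (u : α ⟶ β ⋙ Lan)
    (hLan : (Functor.LeftExtension.mk Lan u).IsPointwiseLeftKanExtension)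
    (Ran : C ⥤ A) (c : β ⋙ Ran ⟶ α)
    (hRan : (Functor.RightExtension.mk Ran c).IsPointwiseRightKanExtension) :
    Nonempty (Lan ⟶ Ran) := by
  haveI h1 : Lan.IsLeftKanExtension u := hLan.isLeftKanExtension
  haveI h2 : Ran.IsRightKanExtension c := hRan.isRightKanExtension
  exact ⟨Lan.descOfIsLeftKanExtension u Ran
    (eqToHom hγ.symm ≫ Functor.whiskerLeft β (Ran.liftOfIsRightKanExtension c γ (eqToHom hγ)))⟩
end
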